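/- arXiv:2303.18137 — 10 statements merged into one kernel-verified Lean document; each statement's English description precedes it below -/
import Mathlib

section
/- Let K and L be distributive lattices with L having a least element 0, let f : K → L be a lattice homomorphism, and let a, b₁, b₂ ∈ K. If the pair (f(b₁), f(b₂)) is consonant in L and f is closed at both (a,b₁) and (a,b₂), then f is closed at (a, b₁ ∨ b₂). -/
/-!
Given `z` with `f a ≤ f b₁ ⊔ f b₂ ⊔ z`, a splitting pair `(u, v)` of `(f b₁, f b₂)` trades `f b₂`
for `v` and `f b₁` for `u`, so `f a ≤ f b₁ ⊔ (v ⊔ z)` and `f a ≤ f b₂ ⊔ (u ⊔ z)`. Closedness at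
`(a, b₁)` and `(a, b₂)` yields `u₁, u₂`, and `u₁ ⊓ u₂` is the required witness because
`(v ⊔ z) ⊓ (u ⊔ z) = (u ⊓ v) ⊔ z = z`.
-/

/-- A lattice homomorphism `f` is *closed at* `(a, b)` if for every `z` with
`f a ≤ f b ⊔ z` there is `u` with `a ≤ b ⊔ u` and `f u ≤ z`. -/
def ClosedAt {K L : Type*} [Lattice K] [Lattice L] (f : LatticeHom K L) (a b : K) : Prop :=
  ∀ z : L, f a ≤ f b ⊔ z → ∃ u : K, a ≤ b ⊔ u ∧ f u ≤ z

/-- A pair `(x, y)` in a lattice with bottom is *consonant* if it admits a splitting pair. -/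
def Consonant {L : Type*} [Lattice L] [OrderBot L] (x y : L) : Prop :=
  ∃ u v : L, x ⊔ y = x ⊔ v ∧ x ⊔ y = u ⊔ y ∧ u ⊓ v = ⊥

section DistribLattice

variable {α : Type*} [DistribLattice α]

theorem le_sup_sup_inf_of_le_sup {a b₁ b₂ u₁ u₂ : α} (h₁ : a ≤ b₁ ⊔ u₁) (h₂ : a ≤ b₂ ⊔ u₂) :
    a ≤ b₁ ⊔ b₂ ⊔ u₁ ⊓ u₂ :=
  calc a ≤ (b₁ ⊔ b₂ ⊔ u₁) ⊓ (b₁ ⊔ b₂ ⊔ u₂) :=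
        le_inf (h₁.trans (sup_le_sup_right le_sup_left _))
          (h₂.trans (sup_le_sup_right le_sup_right _))
    _ = b₁ ⊔ b₂ ⊔ u₁ ⊓ u₂ := (sup_inf_left _ _ _).symm

theorem inf_le_of_le_sup_of_le_sup [OrderBot α] {p q u v z : α} (huv : u ⊓ v = ⊥)
    (hp : p ≤ v ⊔ z) (hq : q ≤ u ⊔ z) : p ⊓ q ≤ z :=
  calc p ⊓ q ≤ (v ⊔ z) ⊓ (u ⊔ z) := inf_le_inf hp hq
    _ = v ⊓ u ⊔ z := (sup_inf_right _ _ _).symm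
    _ = z := by rw [inf_comm, huv, bot_sup_eq]

end DistribLattice

theorem closedAt_sup_right {K L : Type*} [DistribLattice K] [DistribLattice L] [OrderBot L]
    (f : LatticeHom K L) (a b₁ b₂ : K)
    (hcons : Consonant (f b₁) (f b₂))
    (h₁ : ClosedAt f a b₁) (h₂ : ClosedAt f a b₂) :
    ClosedAt f a (b₁ ⊔ b₂) := by
  obtain ⟨u, v, hv, hu, huv⟩ := hcons
  intro z hz
  rw [map_sup] at hz
  obtain ⟨u₁, ha₁, hf₁⟩ := h₁ (v ⊔ z) (by rwa [← sup_assoc, ← hv])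
  obtain ⟨u₂, ha₂, hf₂⟩ := h₂ (u ⊔ z) (by rwa [← sup_assoc, sup_comm (f b₂), ← hu])
  refine ⟨u₁ ⊓ u₂, le_sup_sup_inf_of_le_sup ha₁ ha₂, ?_⟩
  rw [map_inf]
  exact inf_le_of_le_sup_of_le_sup huv hf₁ hf₂
end

section
/- Let K and L be distributive lattices such that L has a least element 0, let Σ be a generating subset of the lattice K, and let f : K → L be a lattice homomorphism whose range f[K] is consonant in L (every pair of elements of f[K] is consonant). If f is closed at every pair in Σ × Σ, then f is closed at every pair in K × K. -/
/-!
For fixed `b`, the elements `a` at which `f` is closed at `(a, b)` form a sublattice of `K`: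
joins are immediate, and for a meet `a ⊓ a'` a splitting pair `(u, v)` of `(f a, f a')` lets one
enlarge `z` to `z ⊔ u` and `z ⊔ v`, solve for `a` and `a'` separately, and intersect, since
`(z ⊔ u) ⊓ (z ⊔ v) = z`. Symmetrically, for fixed `a` the admissible `b` form a sublattice
(now meets are immediate and joins need consonance). Two generation arguments finish the proof.
-/

section

variable {K L : Type*}

lemma Consonant.exists_le_sup [Lattice L] [OrderBot L] {x y : L} (h : Consonant x y) :
    ∃ u v : L, x ≤ u ⊔ y ∧ y ≤ x ⊔ v ∧ u ⊓ v = ⊥ := by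
  obtain ⟨u, v, hv, hu, huv⟩ := h
  exact ⟨u, v, hu ▸ le_sup_left, hv ▸ le_sup_right, huv⟩

lemma le_sup_of_le_sup_of_inf_le [DistribLattice L] {x y u w : L} (hx : x ≤ u ⊔ y)
    (hxy : x ⊓ y ≤ w) : x ≤ w ⊔ u :=
  calc x = x ⊓ (u ⊔ y) := (inf_eq_left.mpr hx).symm
    _ = x ⊓ u ⊔ x ⊓ y := inf_sup_left _ _ _
    _ ≤ w ⊔ u := sup_comm u w ▸ sup_le_sup inf_le_right hxy

lemma sup_inf_sup_eq_of_inf_eq_bot [DistribLattice L] [OrderBot L] (z : L) {u v : L}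
    (huv : u ⊓ v = ⊥) : (z ⊔ u) ⊓ (z ⊔ v) = z := by
  rw [← sup_inf_left, huv, sup_bot_eq]

namespace ClosedAt

lemma sup_left [Lattice K] [Lattice L] {f : LatticeHom K L} {a a' b : K}
    (ha : ClosedAt f a b) (ha' : ClosedAt f a' b) : ClosedAt f (a ⊔ a') b := by
  intro z hz
  rw [map_sup, sup_le_iff] at hz
  obtain ⟨s, hs, hfs⟩ := ha z hz.1
  obtain ⟨t, ht, hft⟩ := ha' z hz.2
  refine ⟨s ⊔ t, ?_, by simpa only [map_sup] using sup_le hfs hft⟩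
  calc a ⊔ a' ≤ (b ⊔ s) ⊔ (b ⊔ t) := sup_le_sup hs ht
    _ = b ⊔ (s ⊔ t) := by rw [sup_sup_sup_comm, sup_idem]

lemma inf_right [DistribLattice K] [Lattice L] {f : LatticeHom K L} {a b b' : K}
    (hb : ClosedAt f a b) (hb' : ClosedAt f a b') : ClosedAt f a (b ⊓ b') := by
  intro z hz
  rw [map_inf] at hz
  obtain ⟨s, hs, hfs⟩ := hb z (hz.trans (sup_le_sup_right inf_le_left z))
  obtain ⟨t, ht, hft⟩ := hb' z (hz.trans (sup_le_sup_right inf_le_right z))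
  refine ⟨s ⊔ t, ?_, by simpa only [map_sup] using sup_le hfs hft⟩
  calc a ≤ (b ⊔ (s ⊔ t)) ⊓ (b' ⊔ (s ⊔ t)) :=
        le_inf (hs.trans (sup_le_sup_left le_sup_left b))
          (ht.trans (sup_le_sup_left le_sup_right b'))
    _ = b ⊓ b' ⊔ (s ⊔ t) := (sup_inf_right _ _ _).symm

variable [DistribLattice K] [DistribLattice L] [OrderBot L] {f : LatticeHom K L}

lemma inf_left {a a' b : K} (hcons : Consonant (f a) (f a'))
    (ha : ClosedAt f a b) (ha' : ClosedAt f a' b) : ClosedAt f (a ⊓ a') b := by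
  intro z hz
  rw [map_inf] at hz
  obtain ⟨u, v, hu, hv, huv⟩ := hcons.exists_le_sup
  obtain ⟨s, hs, hfs⟩ := ha (z ⊔ u) (sup_assoc (f b) z u ▸ le_sup_of_le_sup_of_inf_le hu hz)
  obtain ⟨t, ht, hft⟩ := ha' (z ⊔ v) <| sup_assoc (f b) z v ▸
    le_sup_of_le_sup_of_inf_le (sup_comm (f a) v ▸ hv) (inf_comm (f a) (f a') ▸ hz)
  refine ⟨s ⊓ t, ?_, ?_⟩
  · calc a ⊓ a' ≤ (b ⊔ s) ⊓ (b ⊔ t) := inf_le_inf hs ht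
      _ = b ⊔ s ⊓ t := (sup_inf_left _ _ _).symm
  · calc f (s ⊓ t) = f s ⊓ f t := map_inf _ _ _
      _ ≤ (z ⊔ u) ⊓ (z ⊔ v) := inf_le_inf hfs hft
      _ = z := sup_inf_sup_eq_of_inf_eq_bot z huv

lemma sup_right {a b b' : K} (hcons : Consonant (f b) (f b'))
    (hb : ClosedAt f a b) (hb' : ClosedAt f a b') : ClosedAt f a (b ⊔ b') := by
  intro z hz
  rw [map_sup] at hz
  obtain ⟨u, v, hu, hv, huv⟩ := hcons.exists_le_sup
  have hzb : f a ≤ f b ⊔ (z ⊔ v) := by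
    calc f a ≤ f b ⊔ f b' ⊔ z := hz
      _ ≤ f b ⊔ v ⊔ z := sup_le_sup_right (sup_le le_sup_left hv) z
      _ = f b ⊔ (z ⊔ v) := by rw [sup_assoc, sup_comm v z]
  have hzb' : f a ≤ f b' ⊔ (z ⊔ u) := by
    calc f a ≤ f b ⊔ f b' ⊔ z := hz
      _ ≤ u ⊔ f b' ⊔ z := sup_le_sup_right (sup_le hu le_sup_right) z
      _ = f b' ⊔ (z ⊔ u) := by rw [sup_comm u, sup_assoc, sup_comm u z]
  obtain ⟨s, hs, hfs⟩ := hb _ hzb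
  obtain ⟨t, ht, hft⟩ := hb' _ hzb'
  refine ⟨s ⊓ t, ?_, ?_⟩
  · calc a ≤ (b ⊔ b' ⊔ s) ⊓ (b ⊔ b' ⊔ t) :=
          le_inf (hs.trans (sup_le_sup_right le_sup_left s))
            (ht.trans (sup_le_sup_right le_sup_right t))
      _ = b ⊔ b' ⊔ s ⊓ t := (sup_inf_left _ _ _).symm
  · calc f (s ⊓ t) = f s ⊓ f t := map_inf _ _ _
      _ ≤ (z ⊔ v) ⊓ (z ⊔ u) := inf_le_inf hfs hft
      _ = z := sup_inf_sup_eq_of_inf_eq_bot z (inf_comm v u ▸ huv)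

variable (f)

def leftSublattice (hcons : ∀ x y : K, Consonant (f x) (f y)) (b : K) : Sublattice K where
  carrier := {a | ClosedAt f a b}
  supClosed' _ ha _ ha' := sup_left ha ha'
  infClosed' _ ha _ ha' := inf_left (hcons _ _) ha ha'

def rightSublattice (hcons : ∀ x y : K, Consonant (f x) (f y)) (a : K) : Sublattice K where
  carrier := {b | ClosedAt f a b}
  supClosed' _ hb _ hb' := sup_right (hcons _ _) hb hb'
  infClosed' _ hb _ hb' := inf_right hb hb'

end ClosedAt

end

theorem closed_of_closedAt_generators {K L : Type*} [DistribLattice K] [DistribLattice L]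
    [OrderBot L] (Gen : Set K) (f : LatticeHom K L)
    (hgen : ∀ S : Sublattice K, Gen ⊆ ↑S → ∀ x : K, x ∈ S)
    (hcons : ∀ x ∈ Set.range f, ∀ y ∈ Set.range f, Consonant x y)
    (hGen : ∀ a ∈ Gen, ∀ b ∈ Gen, ClosedAt f a b) :
    ∀ a b : K, ClosedAt f a b := by
  have hcons' : ∀ x y : K, Consonant (f x) (f y) := fun x y =>
    hcons _ ⟨x, rfl⟩ _ ⟨y, rfl⟩
  have closed_at_gen : ∀ a, ∀ g ∈ Gen, ClosedAt f a g := fun a g hg =>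
    hgen (ClosedAt.leftSublattice f hcons' g) (fun a ha => hGen a ha g hg) a
  exact fun a => hgen (ClosedAt.rightSublattice f hcons' a) (closed_at_gen a)
end

section
/- A pair (a,b) in a distributive lattice L with least element 0 is consonant (there exist u,v with a ∨ b = a ∨ v = u ∨ b and u ∧ v = 0) if and only if there exist u,v ∈ L with a = (a ∧ b) ∨ u, b = (a ∧ b) ∨ v, and u ∧ v = 0. -/
/-!
If `a ⊔ b = a ⊔ v = u ⊔ b` with `u ⊓ v = ⊥`, distributivity gives `a = (a ⊓ b) ⊔ (a ⊓ u)` and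
`b = (a ⊓ b) ⊔ (b ⊓ v)`, and `a ⊓ u`, `b ⊓ v` are still disjoint. Conversely, if
`a = (a ⊓ b) ⊔ u` and `b = (a ⊓ b) ⊔ v`, then `(u, v)` itself is a splitting pair, because
the common part `a ⊓ b` is absorbed by either of `a`, `b`.
-/

theorem sup_eq_sup_of_eq_sup_of_le {L : Type*} [SemilatticeSup L] {a b c v : L}
    (hb : b = c ⊔ v) (hc : c ≤ a) : a ⊔ b = a ⊔ v := by
  rw [hb, ← sup_assoc, sup_eq_left.mpr hc]

theorem eq_inf_sup_inf_of_le_sup {L : Type*} [DistribLattice L] {a b u : L} (h : a ≤ u ⊔ b) :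
    a = a ⊓ b ⊔ a ⊓ u :=
  calc a = a ⊓ (u ⊔ b) := (inf_eq_left.mpr h).symm
    _ = a ⊓ b ⊔ a ⊓ u := by rw [inf_sup_left, sup_comm]

theorem consonant_iff {L : Type*} [DistribLattice L] [OrderBot L] (a b : L) :
    (∃ u v : L, a ⊔ b = a ⊔ v ∧ a ⊔ b = u ⊔ b ∧ u ⊓ v = ⊥) ↔
      (∃ u v : L, a = (a ⊓ b) ⊔ u ∧ b = (a ⊓ b) ⊔ v ∧ u ⊓ v = ⊥) := by
  constructor
  · rintro ⟨u, v, hv, hu, huv⟩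
    have ha : a ≤ u ⊔ b := hu ▸ le_sup_left
    have hb : b ≤ v ⊔ a := by rw [sup_comm, ← hv]; exact le_sup_right
    refine ⟨a ⊓ u, b ⊓ v, eq_inf_sup_inf_of_le_sup ha, ?_, ?_⟩
    · rw [inf_comm a b]; exact eq_inf_sup_inf_of_le_sup hb
    · rw [← disjoint_iff] at huv ⊢
      exact huv.mono inf_le_right inf_le_right
  · rintro ⟨u, v, ha, hb, huv⟩
    refine ⟨u, v, sup_eq_sup_of_eq_sup_of_le hb inf_le_left, ?_, huv⟩
    rw [sup_comm a, sup_comm u]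
    exact sup_eq_sup_of_eq_sup_of_le ha inf_le_right
end

section
/- Let A and B be finite subsets of k^(I), the space of finitely supported functions from a set I to a linearly ordered field k. Then ⋂_{a∈A} ⟨a⟩ ⊆ ⋃_{b∈B} ⟨b⟩ holds if and only if there exist scalars ξ_a ≥ 0 (a ∈ A) and η_b ≥ 0 (b ∈ B) such that Σ_{a∈A} ξ_a·a = Σ_{b∈B} η_b·b and at least one ξ_a is nonzero. -/
/-- The open half-space associated to `x ∈ k^(I)`:
`⟨x⟩ = { z : (x ∣ z) > 0 }` where `(x ∣ z) = Σᵢ xᵢ zᵢ`. -/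
def halfSpace {k I : Type*} [Field k] [LinearOrder k] [IsStrictOrderedRing k] (x : I →₀ k) : Set (I →₀ k) :=
  {z | 0 < x.sum fun i xi => xi * z i}

section Aux

variable {k : Type*} [Field k] [LinearOrder k] [IsStrictOrderedRing k] {J : Type*}

/-- The dot product on finitely supported functions. -/
noncomputable def dotp (x y : J →₀ k) : k := Finsupp.linearCombination k ⇑y x

lemma dotp_eq_sum (x y : J →₀ k) : dotp x y = x.sum fun i xi => xi * y i := by
  simp [dotp, Finsupp.linearCombination_apply, smul_eq_mul]

lemma dotp_add_left (x x' y : J →₀ k) : dotp (x + x') y = dotp x y + dotp x' y :=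
  map_add (Finsupp.linearCombination k ⇑y) x x'

lemma dotp_smul_left (t : k) (x y : J →₀ k) : dotp (t • x) y = t * dotp x y := by
  rw [dotp, map_smul, smul_eq_mul, dotp]

lemma dotp_sub_left (x x' y : J →₀ k) : dotp (x - x') y = dotp x y - dotp x' y :=
  map_sub (Finsupp.linearCombination k ⇑y) x x'

lemma dotp_neg_left (x y : J →₀ k) : dotp (-x) y = -dotp x y :=
  map_neg (Finsupp.linearCombination k ⇑y) x

lemma dotp_sum_left {ι : Type*} (S : Finset ι) (f : ι → (J →₀ k)) (y : J →₀ k) :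
    dotp (∑ i ∈ S, f i) y = ∑ i ∈ S, dotp (f i) y :=
  map_sum (Finsupp.linearCombination k ⇑y) f S

lemma dotp_single_left (j : J) (a : k) (y : J →₀ k) :
    dotp (Finsupp.single j a) y = a * y j := by
  simp [dotp, Finsupp.linearCombination_single, smul_eq_mul]

lemma dotp_sub_smul_right (x w z : J →₀ k) (s : k) :
    dotp x (w - s • z) = dotp x w - s * dotp x z := by
  simp only [dotp_eq_sum, Finsupp.sum, Finsupp.coe_sub, Finsupp.coe_smul, Pi.sub_apply,
    Pi.smul_apply, smul_eq_mul, Finset.mul_sum]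
  rw [← Finset.sum_sub_distrib]
  exact Finset.sum_congr rfl fun i _ => by ring

lemma dotp_neg_right (x y : J →₀ k) : dotp x (-y) = -dotp x y := by
  simp only [dotp_eq_sum, Finsupp.sum, Finsupp.coe_neg, Pi.neg_apply, mul_neg,
    Finset.sum_neg_distrib]

lemma dotp_self_pos {c : J →₀ k} (hc : c ≠ 0) : 0 < dotp c c := by
  rw [dotp_eq_sum, Finsupp.sum]
  apply Finset.sum_pos
  · intro i hi
    exact mul_self_pos.mpr (Finsupp.mem_support_iff.mp hi)
  · exact Finsupp.support_nonempty_iff.mpr hc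

lemma dotp_mapDomain {I : Type*} (f : I → J) (x : I →₀ k) (y : J →₀ k) :
    dotp (Finsupp.mapDomain f x) y = x.sum fun i xi => xi * y (f i) := by
  rw [dotp_eq_sum]
  exact Finsupp.sum_mapDomain_index (fun b => by simp) (fun b m₁ m₂ => by ring)

/-- Farkas' lemma for cones, over an arbitrary linearly ordered field, proved by
induction on the (finite) family of generators. -/
lemma farkas_cone {ι : Type*} (S : Finset ι) (v : ι → (J →₀ k)) (c : J →₀ k) :
    (∃ μ : ι → k, (∀ i, 0 ≤ μ i) ∧ c = ∑ i ∈ S, μ i • v i) ∨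
      (∃ z, (∀ i ∈ S, 0 ≤ dotp (v i) z) ∧ dotp c z < 0) := by
  classical
  induction S using Finset.induction_on generalizing v c with
  | empty =>
    by_cases hc : c = 0
    · exact Or.inl ⟨0, fun i => le_refl 0, by simp [hc]⟩
    · refine Or.inr ⟨-c, by simp, ?_⟩
      rw [dotp_neg_right]
      exact neg_neg_of_pos (dotp_self_pos hc)
  | @insert j S₀ hj IH =>
    rcases IH v c with ⟨μ, hμ, hc⟩ | ⟨z, hz, hcz⟩
    · refine Or.inl ⟨fun i => if i = j then 0 else μ i, fun i => ?_, ?_⟩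
      · dsimp only; split
        · exact le_refl 0
        · exact hμ i
      rw [Finset.sum_insert hj]
      beta_reduce
      rw [if_pos rfl, zero_smul, zero_add, hc]
      exact Finset.sum_congr rfl fun i hi => by
        rw [if_neg (ne_of_mem_of_not_mem hi hj)]
    · by_cases hvj : 0 ≤ dotp (v j) z
      · refine Or.inr ⟨z, ?_, hcz⟩
        intro i hi
        rcases Finset.mem_insert.mp hi with rfl | hi
        · exact hvj
        · exact hz i hi
      · push_neg at hvj
        have hd : dotp (v j) z ≠ 0 := ne_of_lt hvj
        set d := dotp (v j) z with hd_def
        rcases IH (fun i => v i - (dotp (v i) z / d) • v j)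
            (c - (dotp c z / d) • v j) with ⟨μ, hμ, hc⟩ | ⟨w, hw, hcw⟩
        · -- cone case: reassemble coefficient for `v j`
          set κ : k := dotp c z / d - ∑ i ∈ S₀, μ i * (dotp (v i) z / d) with hκ_def
          have hκ : 0 ≤ κ := by
            have hnum : κ = (dotp c z - ∑ i ∈ S₀, μ i * dotp (v i) z) / d := by
              rw [hκ_def, sub_div, Finset.sum_div]
              congr 1
              exact Finset.sum_congr rfl fun i _ => by field_simp
            have hsum : 0 ≤ ∑ i ∈ S₀, μ i * dotp (v i) z :=
              Finset.sum_nonneg fun i hi => mul_nonneg (hμ i) (hz i hi)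
            have : dotp c z - ∑ i ∈ S₀, μ i * dotp (v i) z < 0 := by linarith
            rw [hnum]
            exact le_of_lt (div_pos_iff.mpr (Or.inr ⟨this, hvj⟩))
          refine Or.inl ⟨fun i => if i = j then κ else μ i, fun i => ?_, ?_⟩
          · dsimp only; split
            · exact hκ
            · exact hμ i
          · rw [Finset.sum_insert hj]
            beta_reduce
            rw [if_pos rfl]
            have hrw : ∑ i ∈ S₀, (if i = j then κ else μ i) • v i
                = ∑ i ∈ S₀, μ i • v i :=
              Finset.sum_congr rfl fun i hi => by
                rw [if_neg (ne_of_mem_of_not_mem hi hj)]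
            rw [hrw]
            have expand : ∑ i ∈ S₀, μ i • (v i - (dotp (v i) z / d) • v j)
                = ∑ i ∈ S₀, μ i • v i
                  - (∑ i ∈ S₀, μ i * (dotp (v i) z / d)) • v j := by
              rw [Finset.sum_smul, ← Finset.sum_sub_distrib]
              exact Finset.sum_congr rfl fun i _ => by
                rw [smul_sub, smul_smul]
            have := hc
            rw [expand] at this
            have : c = ∑ i ∈ S₀, μ i • v i
                - (∑ i ∈ S₀, μ i * (dotp (v i) z / d)) • v j
                + (dotp c z / d) • v j := by
              rw [← this]; abel
            rw [this, hκ_def, sub_smul]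
            abel
        · -- separating case: project `w` back
          refine Or.inr ⟨w - (dotp (v j) w / d) • z, ?_, ?_⟩
          · intro i hi
            rw [dotp_sub_smul_right]
            rcases Finset.mem_insert.mp hi with rfl | hi
            · rw [div_mul_cancel₀ _ hd]; simp
            · have h1 := hw i hi
              rw [dotp_sub_left, dotp_smul_left] at h1
              have : dotp (v i) w - dotp (v j) w / d * dotp (v i) z
                  = dotp (v i) w - dotp (v i) z / d * dotp (v j) w := by
                field_simp
              rw [this]
              exact h1
          · rw [dotp_sub_smul_right]
            rw [dotp_sub_left, dotp_smul_left] at hcw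
            have : dotp c w - dotp (v j) w / d * dotp c z
                = dotp c w - dotp c z / d * dotp (v j) w := by
              field_simp
            rw [this]
            exact hcw

end Aux

theorem inter_halfSpaces_subset_union_iff {k I : Type*} [Field k] [LinearOrder k] [IsStrictOrderedRing k]
    (A B : Finset (I →₀ k)) :
    (⋂ a ∈ A, halfSpace a) ⊆ (⋃ b ∈ B, halfSpace b) ↔
      ∃ ξ η : (I →₀ k) → k,
        (∀ a ∈ A, 0 ≤ ξ a) ∧ (∀ b ∈ B, 0 ≤ η b) ∧
        (∑ a ∈ A, ξ a • a) = (∑ b ∈ B, η b • b) ∧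
        ∃ a ∈ A, ξ a ≠ 0 := by
  classical
  have hhalf : ∀ (x z : I →₀ k), z ∈ halfSpace x ↔ 0 < dotp x z := by
    intro x z
    rw [halfSpace, Set.mem_setOf_eq, dotp_eq_sum]
  constructor
  · intro hsub
    -- homogenize: work in `Option I`
    set lift : (I →₀ k) → k → (Option I →₀ k) :=
      fun x t => Finsupp.mapDomain some x + Finsupp.single none t with hlift
    have hsome : ∀ (x : I →₀ k) (t : k) (i : I), lift x t (some i) = x i := by
      intro x t i
      simp only [hlift, Finsupp.coe_add, Pi.add_apply,
        Finsupp.mapDomain_apply (Option.some_injective I),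
        Finsupp.single_eq_of_ne' (show (none : Option I) ≠ some i by simp), add_zero]
    have hnone : ∀ (x : I →₀ k) (t : k), lift x t none = t := by
      intro x t
      simp only [hlift, Finsupp.coe_add, Pi.add_apply,
        Finsupp.mapDomain_notin_range _ _ (by simp : (none : Option I) ∉ Set.range some),
        Finsupp.single_eq_same, zero_add]
    set v : (I →₀ k) ⊕ (I →₀ k) → (Option I →₀ k) :=
      Sum.elim (fun a => lift a (-1)) (fun b => lift (-b) 0) with hv
    rcases farkas_cone (A.disjSum B) v (Finsupp.single none (-1)) with
      ⟨μ, hμ, hc⟩ | ⟨y, hy, hcy⟩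
    · -- cone case: extract the coefficients
      rw [Finset.sum_disjSum] at hc
      simp only [hv, Sum.elim_inl, Sum.elim_inr] at hc
      refine ⟨fun a => μ (Sum.inl a), fun b => μ (Sum.inr b),
        fun a _ => hμ _, fun b _ => hμ _, ?_, ?_⟩
      · ext i
        have h1 := DFunLike.congr_fun hc (some i)
        simp only [Finsupp.coe_add, Pi.add_apply, Finsupp.finset_sum_apply,
          Finsupp.smul_apply, smul_eq_mul, hsome,
          Finsupp.single_eq_of_ne' (show (none : Option I) ≠ some i by simp),
          Finsupp.coe_neg, Pi.neg_apply, mul_neg] at h1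
        rw [Finset.sum_neg_distrib] at h1
        simp only [Finsupp.finset_sum_apply, Finsupp.smul_apply, smul_eq_mul]
        linarith
      · have h0 := DFunLike.congr_fun hc none
        simp only [Finsupp.coe_add, Pi.add_apply, Finsupp.finset_sum_apply,
          Finsupp.smul_apply, smul_eq_mul, hnone, Finsupp.single_eq_same,
          mul_neg, mul_one, mul_zero, Finset.sum_const_zero, add_zero] at h0
        rw [Finset.sum_neg_distrib] at h0
        have hsum1 : ∑ a ∈ A, μ (Sum.inl a) = 1 := by linarith
        by_contra hcon
        push_neg at hcon
        rw [Finset.sum_eq_zero hcon] at hsum1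
        exact zero_ne_one hsum1
    · -- separation case: contradiction with the inclusion hypothesis
      exfalso
      set w : I →₀ k := Finsupp.comapDomain some y (Option.some_injective I).injOn with hwdef
      have hw : ∀ i, w i = y (some i) := fun i => rfl
      have hdl : ∀ (x : I →₀ k) (t : k), dotp (lift x t) y = dotp x w + t * y none := by
        intro x t
        simp only [hlift]
        rw [dotp_add_left, dotp_single_left, dotp_mapDomain, dotp_eq_sum]
        congr 1
      have ht : 0 < y none := by
        rw [dotp_single_left] at hcy
        linarith
      have hwA : ∀ a ∈ A, 0 < dotp a w := by
        intro a ha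
        have h := hy (Sum.inl a) (Finset.inl_mem_disjSum.mpr ha)
        simp only [hv, Sum.elim_inl] at h
        rw [hdl] at h
        linarith
      have hwB : ∀ b ∈ B, dotp b w ≤ 0 := by
        intro b hb
        have h := hy (Sum.inr b) (Finset.inr_mem_disjSum.mpr hb)
        simp only [hv, Sum.elim_inr] at h
        rw [hdl, dotp_neg_left] at h
        linarith
      have hmem : w ∈ ⋂ a ∈ A, halfSpace a :=
        Set.mem_iInter₂.mpr fun a ha => (hhalf a w).mpr (hwA a ha)
      rcases Set.mem_iUnion₂.mp (hsub hmem) with ⟨b, hb, hbw⟩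
      exact absurd ((hhalf b w).mp hbw) (not_lt.mpr (hwB b hb))
  · rintro ⟨ξ, η, hξ, hη, heq, a₀, ha₀, hξ₀⟩
    intro z hz
    simp only [Set.mem_iInter] at hz
    have hz' : ∀ a ∈ A, 0 < dotp a z := fun a ha => (hhalf a z).mp (hz a ha)
    have hpos : 0 < ∑ a ∈ A, ξ a * dotp a z := by
      apply Finset.sum_pos'
      · exact fun a ha => mul_nonneg (hξ a ha) (le_of_lt (hz' a ha))
      · exact ⟨a₀, ha₀, mul_pos (lt_of_le_of_ne (hξ a₀ ha₀) (Ne.symm hξ₀)) (hz' a₀ ha₀)⟩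
    have h1 : dotp (∑ a ∈ A, ξ a • a) z = ∑ a ∈ A, ξ a * dotp a z := by
      rw [dotp_sum_left]
      exact Finset.sum_congr rfl fun a _ => dotp_smul_left _ _ _
    have h2 : dotp (∑ b ∈ B, η b • b) z = ∑ b ∈ B, η b * dotp b z := by
      rw [dotp_sum_left]
      exact Finset.sum_congr rfl fun b _ => dotp_smul_left _ _ _
    have hBpos : 0 < ∑ b ∈ B, η b * dotp b z := by
      rw [← h2, ← heq, h1]; exact hpos
    obtain ⟨b, hb, hbpos⟩ : ∃ b ∈ B, 0 < η b * dotp b z := by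
      by_contra hcon
      push_neg at hcon
      exact absurd (Finset.sum_nonpos hcon) (not_le.mpr hBpos)
    have : 0 < dotp b z := by
      by_contra h
      push_neg at h
      nlinarith [hη b hb]
    exact Set.mem_iUnion₂.mpr ⟨b, hb, (hhalf b z).mpr this⟩
end

section
/- Let A be a finite subset of k^(I), the space of finitely supported functions from a set I to a linearly ordered field k. Then ⋂_{a∈A} ⟨a⟩ = ∅ if and only if 0 is in the convex hull of A. -/
section Aux

set_option linter.unusedSectionVars false

variable {k I : Type*} [Field k] [LinearOrder k] [IsStrictOrderedRing k] [DecidableEq I]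

/-- The natural pairing on `I →₀ k`. -/
def inn (x y : I →₀ k) : k := x.sum fun i xi => xi * y i

lemma inn_eq_sum_union (x y : I →₀ k) :
    inn x y = ∑ i ∈ x.support ∪ y.support, x i * y i := by
  refine Finsupp.sum_of_support_subset x Finset.subset_union_left _ ?_
  intros; simp

lemma inn_comm (x y : I →₀ k) : inn x y = inn y x := by
  rw [inn_eq_sum_union, inn_eq_sum_union, Finset.union_comm]
  exact Finset.sum_congr rfl fun i _ => mul_comm _ _

lemma inn_eq_lc (x y : I →₀ k) :
    inn x y = Finsupp.linearCombination k (⇑y) x := by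
  rw [Finsupp.linearCombination_apply, inn]
  simp [smul_eq_mul]

lemma inn_sum_left {ι : Type*} (s : Finset ι) (μ : ι → k) (v : ι → I →₀ k) (z : I →₀ k) :
    inn (∑ i ∈ s, μ i • v i) z = ∑ i ∈ s, μ i * inn (v i) z := by
  simp only [inn_eq_lc, map_sum, map_smul, smul_eq_mul]

lemma inn_add_left (x y z : I →₀ k) : inn (x + y) z = inn x z + inn y z := by
  simp only [inn_eq_lc, map_add]

lemma inn_smul_left (c : k) (x z : I →₀ k) : inn (c • x) z = c * inn x z := by
  simp only [inn_eq_lc, map_smul, smul_eq_mul]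

lemma inn_sub_left (x y z : I →₀ k) : inn (x - y) z = inn x z - inn y z := by
  simp only [inn_eq_lc, map_sub]

lemma inn_zero_left (z : I →₀ k) : inn 0 z = 0 := by
  simp only [inn_eq_lc, map_zero]

lemma inn_add_right (x y z : I →₀ k) : inn z (x + y) = inn z x + inn z y := by
  rw [inn_comm, inn_add_left, inn_comm x z, inn_comm y z]

lemma inn_smul_right (c : k) (x z : I →₀ k) : inn z (c • x) = c * inn z x := by
  rw [inn_comm, inn_smul_left, inn_comm x z]

lemma inn_sub_right (x y z : I →₀ k) : inn z (x - y) = inn z x - inn z y := by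
  rw [inn_comm, inn_sub_left, inn_comm x z, inn_comm y z]

lemma inn_self_pos {x : I →₀ k} (hx : x ≠ 0) : 0 < inn x x := by
  rw [inn_eq_sum_union, Finset.union_self]
  obtain ⟨i, hi⟩ := Finsupp.support_nonempty_iff.mpr hx
  refine Finset.sum_pos' (fun j _ => mul_self_nonneg _) ⟨i, hi, ?_⟩
  exact mul_self_pos.mpr (Finsupp.mem_support_iff.mp hi)

/-- Gordan's theorem over a linearly ordered field, by induction on the number of vectors. -/
lemma gordan {ι : Type*} [DecidableEq ι] :
    ∀ (n : ℕ) (s : Finset ι) (v : ι → I →₀ k), s.card = n →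
    (∃ z, ∀ i ∈ s, 0 < inn (v i) z) ∨
    (∃ μ : ι → k, (∀ i ∈ s, 0 ≤ μ i) ∧ (∑ i ∈ s, μ i • v i) = 0 ∧ ∃ i ∈ s, μ i ≠ 0) := by
  intro n
  induction n with
  | zero =>
    intro s v hs
    left
    exact ⟨0, by simp [Finset.card_eq_zero.mp hs]⟩
  | succ n ih =>
    intro s v hs
    obtain ⟨c, hc⟩ : s.Nonempty := Finset.card_pos.mp (hs ▸ n.succ_pos)
    have hcard : (s.erase c).card = n := by
      rw [Finset.card_erase_of_mem hc, hs]; rfl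
    rcases ih (s.erase c) v hcard with ⟨z₀, hz₀⟩ | ⟨μ, hμ0, hμs, i, hi, hine⟩
    swap
    · right
      refine ⟨fun x => if x = c then 0 else μ x, ?_, ?_, i, Finset.mem_of_mem_erase hi, ?_⟩
      · intro x hx
        show 0 ≤ if x = c then 0 else μ x
        by_cases h : x = c
        · rw [if_pos h]
        · rw [if_neg h]; exact hμ0 x (Finset.mem_erase.mpr ⟨h, hx⟩)
      · have hcg : ∑ x ∈ s.erase c, (if x = c then 0 else μ x) • v x
            = ∑ x ∈ s.erase c, μ x • v x :=
          Finset.sum_congr rfl fun x hx => by rw [if_neg (Finset.mem_erase.mp hx).1]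
        rw [← Finset.add_sum_erase _ _ hc]
        show (if c = c then (0:k) else μ c) • v c + _ = 0
        rw [hcg, hμs, if_pos rfl, zero_smul, add_zero]
      · simp [(Finset.mem_erase.mp hi).1, hine]
    · by_cases hzc : 0 < inn (v c) z₀
      · left
        refine ⟨z₀, fun i hi => ?_⟩
        rcases eq_or_ne i c with rfl | hne
        · exact hzc
        · exact hz₀ i (Finset.mem_erase.mpr ⟨hne, hi⟩)
      · push_neg at hzc
        by_cases hvc : v c = 0
        · right
          refine ⟨fun i => if i = c then 1 else 0, fun i _ => by positivity, ?_, c, hc, by simp⟩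
          rw [Finset.sum_eq_single_of_mem c hc (fun i _ hne => by simp [hne])]
          simp [hvc]
        · have q := inn_self_pos hvc
          set t : ι → k := fun i => inn (v i) (v c) / inn (v c) (v c) with ht
          set w : ι → I →₀ k := fun i => v i - t i • v c with hw
          have hwc : ∀ i, inn (w i) (v c) = 0 := by
            intro i
            rw [hw, inn_sub_left, inn_smul_left, ht, div_mul_cancel₀ _ (ne_of_gt q), sub_self]
          have hvw : ∀ i, v i = w i + t i • v c := by
            intro i; rw [hw]; rw [sub_add_cancel]
          rcases ih (s.erase c) w hcard with ⟨z₁, hz₁⟩ | ⟨μ, hμ0, hμs, j, hj, hjne⟩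
          · -- build a point in all half-spaces
            set z₂ := z₁ - (inn (v c) z₁ / inn (v c) (v c)) • v c with hz₂def
            have hz₂c : inn (v c) z₂ = 0 := by
              rw [hz₂def, inn_sub_right, inn_smul_right, div_mul_cancel₀ _ (ne_of_gt q), sub_self]
            have hz₂ : ∀ i ∈ s.erase c, 0 < inn (v i) z₂ := by
              intro i hi
              have h1 : inn (v i) z₂ = inn (w i) z₂ := by
                rw [hvw i, inn_add_left, inn_smul_left, hz₂c, mul_zero, add_zero]
              have h2 : inn (w i) z₂ = inn (w i) z₁ := by
                rw [hz₂def, inn_sub_right, inn_smul_right, hwc i, mul_zero, sub_zero]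
              rw [h1, h2]; exact hz₁ i hi
            set P : ι → k := fun i => inn (v i) z₂ with hP
            set Q : ι → k := fun i => inn (v i) (v c) with hQ
            set ε : k := if h : (s.erase c).Nonempty then
                min 1 ((s.erase c).inf' h fun i => P i / (|Q i| + 1)) else 1 with hε
            have hεpos : 0 < ε := by
              rw [hε]
              split
              · rename_i h
                refine lt_min one_pos ((Finset.lt_inf'_iff h).mpr fun i hi => ?_)
                exact div_pos (hz₂ i hi) (by positivity)
              · exact one_pos
            have hεle : ∀ i ∈ s.erase c, ε ≤ P i / (|Q i| + 1) := by
              intro i hi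
              rw [hε]
              rw [dif_pos ⟨i, hi⟩]
              exact le_trans (min_le_right _ _) (Finset.inf'_le _ hi)
            left
            refine ⟨z₂ + ε • v c, fun i hi => ?_⟩
            rcases eq_or_ne i c with rfl | hne
            · rw [inn_add_right, inn_smul_right, hz₂c, zero_add]
              exact mul_pos hεpos q
            · have hi' : i ∈ s.erase c := Finset.mem_erase.mpr ⟨hne, hi⟩
              have h1 : ε * (|Q i| + 1) ≤ P i :=
                (le_div_iff₀ (by positivity)).mp (hεle i hi')
              have h2 : -(ε * Q i) ≤ ε * |Q i| := by
                rw [← mul_neg]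
                exact mul_le_mul_of_nonneg_left (neg_le_abs _) (le_of_lt hεpos)
              rw [inn_add_right, inn_smul_right]
              have hp : P i = inn (v i) z₂ := rfl
              have hq : Q i = inn (v i) (v c) := rfl
              rw [← hp, ← hq]
              have h1' : ε * (|Q i| + 1) ≤ P i := h1
              nlinarith [abs_nonneg (Q i)]
          · -- right sub-case: produce nonnegative combination
            have hd : ∑ i ∈ s.erase c, μ i • v i = (∑ i ∈ s.erase c, μ i * t i) • v c := by
              have key : ∀ i, μ i • v i = μ i • w i + (μ i * t i) • v c := by
                intro i; rw [hvw i, smul_add, smul_smul]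
              rw [Finset.sum_congr rfl (fun i _ => key i), Finset.sum_add_distrib, hμs,
                zero_add, ← Finset.sum_smul]
            set d := ∑ i ∈ s.erase c, μ i * t i with hdd
            have hpos : 0 < inn (∑ i ∈ s.erase c, μ i • v i) z₀ := by
              rw [inn_sum_left]
              exact Finset.sum_pos'
                (fun i hi => mul_nonneg (hμ0 i hi) (le_of_lt (hz₀ i hi)))
                ⟨j, hj, mul_pos ((hμ0 j hj).lt_of_ne (Ne.symm hjne)) (hz₀ j hj)⟩
            have heq : inn (∑ i ∈ s.erase c, μ i • v i) z₀ = d * inn (v c) z₀ := by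
              rw [hd, inn_smul_left]
            have hd0 : d ≤ 0 := by
              by_contra hcon
              push_neg at hcon
              have := mul_nonpos_of_nonneg_of_nonpos (le_of_lt hcon) hzc
              rw [heq] at hpos
              linarith
            right
            refine ⟨fun i => if i = c then -d else μ i, ?_, ?_, j, Finset.mem_of_mem_erase hj, ?_⟩
            · intro i hi
              show 0 ≤ if i = c then -d else μ i
              by_cases h : i = c
              · rw [if_pos h]; linarith
              · rw [if_neg h]; exact hμ0 i (Finset.mem_erase.mpr ⟨h, hi⟩)
            · have hcg : ∑ x ∈ s.erase c, (if x = c then -d else μ x) • v x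
                  = ∑ x ∈ s.erase c, μ x • v x :=
                Finset.sum_congr rfl fun x hx => by rw [if_neg (Finset.mem_erase.mp hx).1]
              rw [← Finset.add_sum_erase _ _ hc]
              show (if c = c then -d else μ c) • v c + _ = 0
              rw [hcg, hd, if_pos rfl, neg_smul, neg_add_cancel]
            · simp [(Finset.mem_erase.mp hj).1, hjne]

end Aux

theorem inter_halfSpaces_empty_iff {k I : Type*} [Field k] [LinearOrder k] [IsStrictOrderedRing k]
    (A : Finset (I →₀ k)) :
    (⋂ a ∈ A, halfSpace a) = ∅ ↔ (0 : I →₀ k) ∈ convexHull k (A : Set (I →₀ k)) := by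
  classical
  constructor
  · intro hemp
    rcases gordan A.card A id rfl with ⟨z, hz⟩ | ⟨μ, h0, hsum, a, ha, hane⟩
    · exfalso
      have hzmem : z ∈ ⋂ a ∈ A, halfSpace a :=
        Set.mem_iInter₂.mpr fun a ha => hz a ha
      rw [hemp] at hzmem
      exact Set.notMem_empty z hzmem
    · have hT : 0 < ∑ a ∈ A, μ a :=
        Finset.sum_pos' h0 ⟨a, ha, (h0 a ha).lt_of_ne (Ne.symm hane)⟩
      have hmem : ∀ i ∈ A, id i ∈ (A : Set (I →₀ k)) := fun i hi => hi
      have := Finset.centerMass_mem_convexHull A h0 hT hmem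
      rw [Finset.centerMass] at this
      simp only [id_eq] at this hsum
      rwa [hsum, smul_zero] at this
  · intro h0mem
    obtain ⟨wt, hw0, hw1, hwc⟩ := Finset.mem_convexHull.mp h0mem
    rw [Finset.centerMass_eq_of_sum_1 _ _ hw1] at hwc
    rw [Set.eq_empty_iff_forall_notMem]
    intro z hz
    rw [Set.mem_iInter₂] at hz
    have h1 : 0 < inn (∑ a ∈ A, wt a • id a) z := by
      rw [inn_sum_left]
      obtain ⟨a, ha, hane⟩ := Finset.exists_ne_zero_of_sum_ne_zero (hw1 ▸ (one_ne_zero : (1:k) ≠ 0))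
      exact Finset.sum_pos'
        (fun b hb => mul_nonneg (hw0 b hb) (le_of_lt (hz b hb)))
        ⟨a, ha, mul_pos ((hw0 a ha).lt_of_ne (Ne.symm hane)) (hz a ha)⟩
    rw [hwc, inn_zero_left] at h1
    exact lt_irrefl 0 h1
end

section
/- Let A and B be finite subsets of k^(I) with k a linearly ordered field. If the convex hull of A meets the cone generated by B (the additive submonoid generated by all nonnegative scalar multiples of elements of B, which contains 0), then ⋂_{a∈A} ⟨a⟩ ⊆ ⋃_{b∈B} ⟨b⟩, where ⟨a⟩ = { z : (a ∣ z) > 0 }. -/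
/-- The cone generated by `B`: the additive submonoid generated by all
nonnegative scalar multiples of elements of `B`. -/
noncomputable def cone {k I : Type*} [Field k] [LinearOrder k] [IsStrictOrderedRing k] (B : Set (I →₀ k)) : AddSubmonoid (I →₀ k) :=
  AddSubmonoid.closure {x | ∃ b ∈ B, ∃ c : k, 0 ≤ c ∧ x = c • b}

theorem inter_halfSpaces_subset_of_convexHull_meets_cone {k I : Type*} [Field k] [LinearOrder k] [IsStrictOrderedRing k]
    (A B : Finset (I →₀ k))
    (h : (convexHull k (A : Set (I →₀ k)) ∩ (cone (B : Set (I →₀ k)) : Set (I →₀ k))).Nonempty) :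
    (⋂ a ∈ A, halfSpace a) ⊆ ⋃ b ∈ B, halfSpace b := by
  obtain ⟨x, hxA, hxB⟩ := h
  intro z hz
  set L : (I →₀ k) →ₗ[k] k := Finsupp.linearCombination k (⇑z) with hL
  have hLdef : ∀ y : I →₀ k, L y = y.sum fun i yi => yi * z i := by
    intro y
    simp [hL, Finsupp.linearCombination_apply, Finsupp.sum, smul_eq_mul]
  -- positivity on convex hull
  have hpos : 0 < L x := by
    have hconv : Convex k {w : I →₀ k | 0 < L w} :=
      convex_halfSpace_gt (LinearMap.isLinear L) 0
    have hsub : (A : Set (I →₀ k)) ⊆ {w | 0 < L w} := by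
      intro a ha
      have := Set.mem_iInter₂.1 hz a ha
      simpa [halfSpace, hLdef] using this
    exact convexHull_min hsub hconv hxA
  by_contra hcon
  -- all b in B have L b ≤ 0
  have hble : ∀ b ∈ B, L b ≤ 0 := by
    intro b hb
    by_contra hb'
    exact hcon (Set.mem_iUnion₂.2 ⟨b, hb, by simpa [halfSpace, hLdef] using lt_of_not_ge hb'⟩)
  have hle : L x ≤ 0 := by
    refine AddSubmonoid.closure_induction (motive := fun y _ => L y ≤ 0) ?_ (by simp) ?_ hxB
    · rintro y ⟨b, hb, c, hc, rfl⟩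
      have : L (c • b) = c * L b := by simp
      rw [this]
      exact mul_nonpos_of_nonneg_of_nonpos hc (hble b hb)
    · intro y w _ _ hy hw
      have : L (y + w) = L y + L w := map_add L y w
      rw [this]
      exact add_nonpos hy hw
  exact absurd hpos (not_lt.2 hle)
end

section
/- Let L be a distributive lattice with least element 0, let φ be a map from open half-spaces of k^(I) to L that is induced by a lattice homomorphism on the lattice generated by all ⟨x⟩ and sends ∅ to 0, let a, b ∈ k^(I), let λ ∈ k with λ ≥ 0, and let e ∈ L. Then φ⟨a⟩ ∧ φ⟨a − λb⟩ ≤ e holds if and only if both φ⟨a⟩ ≤ φ⟨b⟩ ∨ e and φ⟨a − λb⟩ ≤ φ⟨−b⟩ ∨ e hold. -/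
/-- `Op⁻ k^(I)`: the sublattice of the powerset of `k^(I)` generated by `∅` together
with all open half-spaces `⟨x⟩`. -/
def OpNeg (k I : Type*) [Field k] [LinearOrder k] [IsStrictOrderedRing k] : Sublattice (Set (I →₀ k)) :=
  sInf {S | ∅ ∈ S ∧ ∀ x : I →₀ k, halfSpace x ∈ S}

lemma empty_mem_OpNeg {k I : Type*} [Field k] [LinearOrder k] [IsStrictOrderedRing k] :
    (∅ : Set (I →₀ k)) ∈ OpNeg k I :=
  Sublattice.mem_sInf.2 fun _ hS => hS.1

lemma halfSpace_mem_OpNeg {k I : Type*} [Field k] [LinearOrder k] [IsStrictOrderedRing k] (x : I →₀ k) :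
    halfSpace x ∈ OpNeg k I :=
  Sublattice.mem_sInf.2 fun _ hS => hS.2 x

/-- The half-space `⟨x⟩` as an element of the lattice `Op⁻ k^(I)`. -/
def hs {k I : Type*} [Field k] [LinearOrder k] [IsStrictOrderedRing k] (x : I →₀ k) : OpNeg k I :=
  ⟨halfSpace x, halfSpace_mem_OpNeg x⟩

section aux
variable {k I : Type*} [Field k] [LinearOrder k] [IsStrictOrderedRing k]

lemma pair_eq (x z : I →₀ k) :
    (x.sum fun i xi => xi * z i) = Finsupp.linearCombination k (⇑z) x := by
  simp [Finsupp.linearCombination_apply, Finsupp.sum, smul_eq_mul]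

lemma mem_halfSpace_iff (x z : I →₀ k) :
    z ∈ halfSpace x ↔ 0 < Finsupp.linearCombination k (⇑z) x := by
  rw [halfSpace, Set.mem_setOf_eq, pair_eq]

lemma inter_empty (b : I →₀ k) : hs b ⊓ hs (-b) = (⟨∅, empty_mem_OpNeg⟩ : OpNeg k I) := by
  apply Subtype.ext
  show (halfSpace b ∩ halfSpace (-b) : Set (I →₀ k)) = ∅
  ext z
  simp only [Set.mem_inter_iff, Set.mem_empty_iff_false, iff_false, not_and]
  intro h1 h2
  rw [mem_halfSpace_iff] at h1 h2
  rw [map_neg] at h2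
  linarith

lemma sub1 (a b : I →₀ k) (lam : k) (hlam : 0 ≤ lam) :
    hs a ≤ hs b ⊔ (hs a ⊓ hs (a - lam • b)) := by
  show (halfSpace a : Set (I →₀ k)) ⊆ halfSpace b ∪ (halfSpace a ∩ halfSpace (a - lam • b))
  intro z hz
  rw [mem_halfSpace_iff] at hz
  by_cases hb : z ∈ halfSpace b
  · exact Or.inl hb
  · refine Or.inr ⟨(mem_halfSpace_iff a z).2 hz, (mem_halfSpace_iff _ z).2 ?_⟩
    rw [mem_halfSpace_iff, not_lt] at hb
    rw [map_sub, map_smul, smul_eq_mul]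
    nlinarith

lemma sub2 (a b : I →₀ k) (lam : k) (hlam : 0 ≤ lam) :
    hs (a - lam • b) ≤ hs (-b) ⊔ (hs a ⊓ hs (a - lam • b)) := by
  show (halfSpace (a - lam • b) : Set (I →₀ k)) ⊆
      halfSpace (-b) ∪ (halfSpace a ∩ halfSpace (a - lam • b))
  intro z hz
  rw [mem_halfSpace_iff, map_sub, map_smul, smul_eq_mul] at hz
  by_cases hb : z ∈ halfSpace (-b)
  · exact Or.inl hb
  · refine Or.inr ⟨(mem_halfSpace_iff a z).2 ?_, (mem_halfSpace_iff _ z).2 ?_⟩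
    · rw [mem_halfSpace_iff, map_neg, not_lt, neg_nonpos] at hb
      nlinarith
    · rw [map_sub, map_smul, smul_eq_mul]; exact hz

end aux

theorem inf_le_iff_of_halfSpaces {k I L : Type*} [Field k] [LinearOrder k] [IsStrictOrderedRing k]
    [DistribLattice L] [OrderBot L]
    (φ : LatticeHom (OpNeg k I) L) (hbot : φ ⟨∅, empty_mem_OpNeg⟩ = ⊥)
    (a b : I →₀ k) (lam : k) (hlam : 0 ≤ lam) (e : L) :
    φ (hs a) ⊓ φ (hs (a - lam • b)) ≤ e ↔
      φ (hs a) ≤ φ (hs b) ⊔ e ∧ φ (hs (a - lam • b)) ≤ φ (hs (-b)) ⊔ e := by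
  constructor
  · intro h
    constructor
    · calc φ (hs a) ≤ φ (hs b ⊔ (hs a ⊓ hs (a - lam • b))) := OrderHomClass.monotone φ (sub1 a b lam hlam)
        _ = φ (hs b) ⊔ (φ (hs a) ⊓ φ (hs (a - lam • b))) := by rw [map_sup, map_inf]
        _ ≤ φ (hs b) ⊔ e := sup_le_sup_left h _
    · calc φ (hs (a - lam • b)) ≤ φ (hs (-b) ⊔ (hs a ⊓ hs (a - lam • b))) :=
          OrderHomClass.monotone φ (sub2 a b lam hlam)
        _ = φ (hs (-b)) ⊔ (φ (hs a) ⊓ φ (hs (a - lam • b))) := by rw [map_sup, map_inf]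
        _ ≤ φ (hs (-b)) ⊔ e := sup_le_sup_left h _
  · rintro ⟨h1, h2⟩
    calc φ (hs a) ⊓ φ (hs (a - lam • b)) ≤ (φ (hs b) ⊔ e) ⊓ (φ (hs (-b)) ⊔ e) :=
        inf_le_inf h1 h2
      _ = (φ (hs b) ⊓ φ (hs (-b))) ⊔ e := (sup_inf_right _ _ _).symm
      _ = φ (hs b ⊓ hs (-b)) ⊔ e := by rw [map_inf]
      _ = e := by rw [inter_empty, hbot, bot_sup_eq]
end

section
/- Let L be a distributive lattice with 0, let φ : Op⁻k^(I) → L be a 0-lattice homomorphism, let a, b ∈ k^(I), and let e ∈ L with φ⟨a⟩ ≤ φ⟨b⟩ ∨ e. Then for all scalars λ, λ′ with 0 ≤ λ ≤ λ′, if φ⟨a⟩ ∧ φ⟨a − λb⟩ ≤ e then φ⟨a⟩ ∧ φ⟨a − λ′b⟩ ≤ e. -/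
lemma pair_linear {k I : Type*} [Field k] [LinearOrder k] [IsStrictOrderedRing k] (x z : I →₀ k) :
    (x.sum fun i xi => xi * z i) = Finsupp.linearCombination k (fun i => z i) x := by
  simp [Finsupp.linearCombination_apply, smul_eq_mul]

lemma hs_inf_le {k I : Type*} [Field k] [LinearOrder k] [IsStrictOrderedRing k] (a b : I →₀ k) {lam lam' : k}
    (h : lam ≤ lam') :
    hs (a - lam' • b) ⊓ hs b ≤ hs (a - lam • b) := by
  rintro z ⟨hz1, hz2⟩
  simp only [hs, Sublattice.mem_mk] at *
  simp only [halfSpace, Set.mem_setOf_eq, pair_linear, map_sub, map_smul,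
    smul_eq_mul] at *
  nlinarith

theorem inf_le_mono_scalar {k I L : Type*} [Field k] [LinearOrder k] [IsStrictOrderedRing k]
    [DistribLattice L] [OrderBot L]
    (φ : LatticeHom (OpNeg k I) L) (hbot : φ ⟨∅, empty_mem_OpNeg⟩ = ⊥)
    (a b : I →₀ k) (e : L) (he : φ (hs a) ≤ φ (hs b) ⊔ e) :
    ∀ lam lam' : k, 0 ≤ lam → lam ≤ lam' →
      φ (hs a) ⊓ φ (hs (a - lam • b)) ≤ e →
      φ (hs a) ⊓ φ (hs (a - lam' • b)) ≤ e := by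
  intro lam lam' _ hll h
  set u := φ (hs a) ⊓ φ (hs (a - lam' • b)) with hu
  have h1 : u ≤ φ (hs b) ⊔ e := le_trans inf_le_left he
  have h2 : u ⊓ φ (hs b) ≤ e := by
    have : φ (hs (a - lam' • b)) ⊓ φ (hs b) ≤ φ (hs (a - lam • b)) := by
      rw [← map_inf φ]
      exact OrderHomClass.mono φ (hs_inf_le a b hll)
    calc u ⊓ φ (hs b) ≤ φ (hs a) ⊓ (φ (hs (a - lam' • b)) ⊓ φ (hs b)) := by
          rw [hu]; rw [inf_assoc]
      _ ≤ φ (hs a) ⊓ φ (hs (a - lam • b)) := inf_le_inf_left _ this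
      _ ≤ e := h
  calc u = u ⊓ (φ (hs b) ⊔ e) := (inf_eq_left.2 h1).symm
    _ = (u ⊓ φ (hs b)) ⊔ (u ⊓ e) := inf_sup_left _ _ _
    _ ≤ e := sup_le h2 inf_le_right
end

section
/- For any abelian lattice-ordered group G, the lattice Id_c G of principal ℓ-ideals of G is completely normal: for all A, B ∈ Id_c G there exist U, V ∈ Id_c G such that A ∨ B = A ∨ V = U ∨ B and U ∧ V = ⟨0⟩. (Concretely, for a, b ∈ G⁺ one may take U = ⟨(a − b)⁺⟩ and V = ⟨(b − a)⁺⟩.) -/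
/-- The principal ℓ-ideal generated by `x`: all `y` with `|y| ≤ n • |x|` for some `n : ℕ`. -/
def pIdeal {G : Type*} [Lattice G] [AddCommGroup G] (x : G) : Set G :=
  {y | ∃ n : ℕ, |y| ≤ n • |x|}

/-!
With `u = (a - b)⁺` and `v = (b - a)⁺` one has `a ⊔ b = a + v = b + u`, and `a ⊔ b` is squeezed
between `a ⊔ v` and `2 • (a ⊔ v)` (similarly for `u ⊔ b`), so the principal ℓ-ideals agree.
Since `u ⊓ v = 0`, also `(n • u) ⊓ (m • v) = 0` for all `n, m`, so an element bounded by
multiples of both `u` and `v` vanishes.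
-/

section LatticeOrderedGroup

variable {G : Type*} [Lattice G] [AddCommGroup G] [AddLeftMono G]

lemma eq_zero_of_abs_nonpos {y : G} (h : |y| ≤ 0) : y = 0 :=
  le_antisymm ((le_abs_self y).trans h) (neg_nonpos.1 ((neg_le_abs y).trans h))

lemma pIdeal_zero : pIdeal (0 : G) = {0} := by
  ext y
  refine ⟨fun ⟨n, hn⟩ => eq_zero_of_abs_nonpos (by simpa using hn), ?_⟩
  rintro rfl
  exact ⟨0, by simp⟩

lemma pIdeal_subset_of_le_nsmul {x y : G} {n : ℕ} (hx : 0 ≤ x) (h : x ≤ n • y) :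
    pIdeal x ⊆ pIdeal y := by
  rintro z ⟨k, hk⟩
  refine ⟨k * n, ?_⟩
  calc |z| ≤ k • x := abs_of_nonneg hx ▸ hk
    _ ≤ k • (n • |y|) :=
      nsmul_le_nsmul_right (h.trans (nsmul_le_nsmul_right (le_abs_self y) n)) k
    _ = (k * n) • |y| := (mul_nsmul' ..).symm

lemma pIdeal_sup_posPart_sub {a b : G} (ha : 0 ≤ a) (hb : 0 ≤ b) :
    pIdeal (a ⊔ (b - a)⁺) = pIdeal (a ⊔ b) := by
  have hv : (b - a)⁺ ≤ b := sup_le (sub_le_self b ha) hb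
  refine (pIdeal_subset_of_le_nsmul (n := 1) (ha.trans le_sup_left) ?_).antisymm
    (pIdeal_subset_of_le_nsmul (n := 2) (ha.trans le_sup_left) ?_)
  · rw [one_nsmul]
    exact sup_le_sup_left hv a
  · calc a ⊔ b = a + (b - a)⁺ := by rw [sup_comm, sup_eq_add_posPart_sub]
      _ ≤ (a ⊔ (b - a)⁺) + (a ⊔ (b - a)⁺) := add_le_add le_sup_left le_sup_right
      _ = 2 • (a ⊔ (b - a)⁺) := (two_nsmul _).symm

lemma add_inf_le_inf_add_inf {a b c : G} (ha : 0 ≤ a) (hb : 0 ≤ b) (hc : 0 ≤ c) :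
    (a + b) ⊓ c ≤ a ⊓ c + b ⊓ c := by
  rw [add_inf, inf_add, inf_add, inf_inf_inf_comm]
  exact le_inf (le_inf inf_le_left (inf_le_right.trans (le_add_of_nonneg_left ha)))
    (le_inf (inf_le_right.trans (le_add_of_nonneg_right hb))
      (inf_le_right.trans (le_add_of_nonneg_left hc)))

lemma nsmul_inf_eq_zero {u v : G} (hu : 0 ≤ u) (hv : 0 ≤ v) (huv : u ⊓ v = 0) (n : ℕ) :
    (n • u) ⊓ v = 0 := by
  induction n with
  | zero => simpa using hv
  | succ k ih =>
    refine le_antisymm ?_ (le_inf (nsmul_nonneg hu _) hv)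
    calc (k + 1) • u ⊓ v = (k • u + u) ⊓ v := by rw [succ_nsmul]
      _ ≤ (k • u) ⊓ v + u ⊓ v := add_inf_le_inf_add_inf (nsmul_nonneg hu k) hu hv
      _ = 0 := by rw [ih, huv, add_zero]

lemma nsmul_inf_nsmul_eq_zero {u v : G} (hu : 0 ≤ u) (hv : 0 ≤ v) (huv : u ⊓ v = 0)
    (n m : ℕ) : (n • u) ⊓ (m • v) = 0 := by
  have hvu : v ⊓ n • u = 0 := by rw [inf_comm, nsmul_inf_eq_zero hu hv huv]
  rw [inf_comm]
  exact nsmul_inf_eq_zero hv (nsmul_nonneg hu n) hvu m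

lemma pIdeal_inter_pIdeal_of_inf_eq_zero {u v : G} (hu : 0 ≤ u) (hv : 0 ≤ v)
    (huv : u ⊓ v = 0) : pIdeal u ∩ pIdeal v = {0} := by
  refine Set.eq_singleton_iff_unique_mem.2 ⟨⟨⟨0, by simp⟩, ⟨0, by simp⟩⟩, ?_⟩
  rintro z ⟨⟨n, hn⟩, ⟨m, hm⟩⟩
  rw [abs_of_nonneg hu] at hn
  rw [abs_of_nonneg hv] at hm
  exact eq_zero_of_abs_nonpos (nsmul_inf_nsmul_eq_zero hu hv huv n m ▸ le_inf hn hm)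

end LatticeOrderedGroup

/-- `Id_c G` is completely normal: every pair of principal ℓ-ideals has a splitting pair
(joins of principal ℓ-ideals being given by `⟨a⟩ ∨ ⟨b⟩ = ⟨a ⊔ b⟩`). -/
theorem Idc_completely_normal {G : Type*} [Lattice G] [AddCommGroup G]
    [CovariantClass G G (· + ·) (· ≤ ·)] (a b : G) (ha : 0 ≤ a) (hb : 0 ≤ b) :
    ∃ u v : G, 0 ≤ u ∧ 0 ≤ v ∧
      pIdeal (a ⊔ b) = pIdeal (a ⊔ v) ∧
      pIdeal (a ⊔ b) = pIdeal (u ⊔ b) ∧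
      pIdeal u ∩ pIdeal v = pIdeal (0 : G) := by
  have hdisj : (a - b)⁺ ⊓ (b - a)⁺ = 0 := by
    rw [← neg_sub a b, posPart_neg, posPart_inf_negPart_eq_zero]
  refine ⟨(a - b)⁺, (b - a)⁺, posPart_nonneg _, posPart_nonneg _,
    (pIdeal_sup_posPart_sub ha hb).symm, ?_, ?_⟩
  · rw [sup_comm a b, sup_comm _ b]
    exact (pIdeal_sup_posPart_sub hb ha).symm
  · rw [pIdeal_zero]
    exact pIdeal_inter_pIdeal_of_inf_eq_zero (posPart_nonneg _) (posPart_nonneg _) hdisj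
end

section
/- Let G and H be abelian ℓ-groups and let p : G → H be a surjective ℓ-homomorphism. Then the induced lattice homomorphism Id_c p : Id_c G → Id_c H is surjective and closed: for all a, b ∈ G⁺ and x ∈ H⁺, if ⟨p(a)⟩ ≤ ⟨p(b)⟩ ∨ ⟨x⟩ in Id_c H then there exists u ∈ G⁺ with ⟨a⟩ ≤ ⟨b⟩ ∨ ⟨u⟩ in Id_c G and ⟨p(u)⟩ ≤ ⟨x⟩ in Id_c H. -/
theorem Idc_surjective_closed {G H : Type*}
    [Lattice G] [AddCommGroup G] [CovariantClass G G (· + ·) (· ≤ ·)]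
    [Lattice H] [AddCommGroup H] [CovariantClass H H (· + ·) (· ≤ ·)]
    (p : G → H) (hadd : ∀ x y : G, p (x + y) = p x + p y)
    (hsup : ∀ x y : G, p (x ⊔ y) = p x ⊔ p y) (hinf : ∀ x y : G, p (x ⊓ y) = p x ⊓ p y)
    (hsurj : Function.Surjective p) :
    -- Id_c p is surjective
    (∀ y : H, 0 ≤ y → ∃ x : G, 0 ≤ x ∧ pIdeal (p x) = pIdeal y) ∧
    -- Id_c p is closed (joins of principal ℓ-ideals being ⟨c⟩ ∨ ⟨d⟩ = ⟨c ⊔ d⟩)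
    (∀ a b : G, ∀ x : H, 0 ≤ a → 0 ≤ b → 0 ≤ x →
      pIdeal (p a) ⊆ pIdeal (p b ⊔ x) →
      ∃ u : G, 0 ≤ u ∧ pIdeal a ⊆ pIdeal (b ⊔ u) ∧ pIdeal (p u) ⊆ pIdeal x) := by
  have hp0 : p 0 = 0 := by
    have h := hadd 0 0
    simp only [add_zero] at h
    exact left_eq_add.mp h
  have hpneg : ∀ x : G, p (-x) = -p x := by
    intro x
    have h := hadd x (-x)
    rw [add_neg_cancel, hp0] at h
    exact (neg_eq_of_add_eq_zero_right h.symm).symm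
  have hpabs : ∀ x : G, p |x| = |p x| := by
    intro x
    rw [abs, abs, hsup, hpneg]
  have hpsmul : ∀ (n : ℕ) (x : G), p (n • x) = n • p x := by
    intro n x
    induction n with
    | zero => simpa using hp0
    | succ k ih => rw [succ_nsmul, succ_nsmul, hadd, ih]
  constructor
  · -- surjectivity
    intro y hy
    obtain ⟨z, hz⟩ := hsurj y
    refine ⟨z ⊔ 0, le_sup_right, ?_⟩
    rw [hsup, hz, hp0, sup_of_le_left hy]
  · -- closedness
    intro a b x ha hb hx hsub
    -- p a is in the ideal of p b ⊔ x
    have hpa_mem : p a ∈ pIdeal (p a) := ⟨1, by simp⟩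
    obtain ⟨n, hn⟩ := hsub hpa_mem
    have hpb : (0:H) ≤ p b := by
      have h := hsup 0 b
      rw [sup_of_le_right hb, hp0] at h
      exact le_of_sup_eq h.symm
    have habs_pa : |p a| = p a := by
      rw [← hpabs, abs_of_nonneg ha]
    have habs_bx : |p b ⊔ x| = p b ⊔ x := abs_of_nonneg (le_trans hx le_sup_right)
    rw [habs_pa, habs_bx] at hn
    -- p b ⊔ x ≤ p b + x
    have hsum : p b ⊔ x ≤ p b + x := sup_le (le_add_of_nonneg_right hx) (le_add_of_nonneg_left hpb)
    have hpa_le : p a ≤ n • p b + n • x := by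
      calc p a ≤ n • (p b ⊔ x) := hn
        _ ≤ n • (p b + x) := nsmul_le_nsmul_right hsum n
        _ = n • p b + n • x := nsmul_add _ _ _
    set u := (a - n • b) ⊔ 0 with hu_def
    have hu0 : (0:G) ≤ u := le_sup_right
    have hau : a ≤ n • b + u := by
      have : a - n • b ≤ u := le_sup_left
      have := add_le_add_right this (n • b)
      simpa [add_sub_cancel] using this
    have hbu0 : (0:G) ≤ b ⊔ u := le_trans hb le_sup_left
    have ha_le : a ≤ (n + 1) • (b ⊔ u) := by
      calc a ≤ n • b + u := hau
        _ ≤ n • (b ⊔ u) + (b ⊔ u) := add_le_add (nsmul_le_nsmul_right le_sup_left n) le_sup_right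
        _ = (n + 1) • (b ⊔ u) := (succ_nsmul _ _).symm
    have hpu_le : p u ≤ n • x := by
      have hpu : p u = (p a - n • p b) ⊔ 0 := by
        rw [hu_def, hsup, hp0, sub_eq_add_neg, hadd, hpneg, hpsmul, ← sub_eq_add_neg]
      rw [hpu]
      exact sup_le (sub_le_iff_le_add'.mpr hpa_le) (nsmul_nonneg hx n)
    have hpu0 : (0:H) ≤ p u := by
      rw [hu_def, hsup, hp0]; exact le_sup_right
    refine ⟨u, hu0, ?_, ?_⟩
    · rintro y ⟨m, hm⟩
      refine ⟨(n + 1) * m, ?_⟩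
      rw [abs_of_nonneg ha] at hm
      calc |y| ≤ m • a := hm
        _ ≤ m • ((n + 1) • (b ⊔ u)) := nsmul_le_nsmul_right ha_le m
        _ = ((n + 1) * m) • (b ⊔ u) := (mul_nsmul _ _ _).symm
        _ = ((n + 1) * m) • |b ⊔ u| := by rw [abs_of_nonneg hbu0]
    · rintro y ⟨m, hm⟩
      refine ⟨n * m, ?_⟩
      rw [abs_of_nonneg hpu0] at hm
      calc |y| ≤ m • p u := hm
        _ ≤ m • (n • x) := nsmul_le_nsmul_right hpu_le m
        _ = (n * m) • x := (mul_nsmul _ _ _).symm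
        _ = (n * m) • |x| := by rw [abs_of_nonneg hx]
end
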